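/- Under the non-confounding assumption (A ⟂ (Y0,Y1) | X), the chain of inequalities B_X ≥ B_{Y0,Y1} ≥ max(B_{Y0}, B_{Y1}, B_{Y1-Y0}) holds, where B_Z := I(A; Z)/H(A), assuming H(A) > 0. -/

import Mathlib

open Finset

noncomputable def prob {Ω α : Type*} [Fintype Ω] [DecidableEq α]
    (w : Ω → ℝ) (A : Ω → α) (a : α) : ℝ :=
  ∑ ω ∈ Finset.univ.filter (fun ω => A ω = a), w ω

noncomputable def entropy {Ω α : Type*} [Fintype Ω] [DecidableEq α]
    (w : Ω → ℝ) (A : Ω → α) : ℝ :=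
  -∑ a ∈ Finset.univ.image A, prob w A a * Real.log (prob w A a)

noncomputable def condEntropy {Ω α β : Type*} [Fintype Ω] [DecidableEq α] [DecidableEq β]
    (w : Ω → ℝ) (A : Ω → α) (Z : Ω → β) : ℝ :=
  ∑ z ∈ Finset.univ.image Z, prob w Z z *
    (-∑ a ∈ Finset.univ.image A,
      (prob w (fun ω => (A ω, Z ω)) (a, z) / prob w Z z) *
        Real.log (prob w (fun ω => (A ω, Z ω)) (a, z) / prob w Z z))

noncomputable def mutualInfo {Ω α β : Type*} [Fintype Ω] [DecidableEq α] [DecidableEq β]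
    (w : Ω → ℝ) (A : Ω → α) (Z : Ω → β) : ℝ :=
  entropy w A - condEntropy w A Z

noncomputable def bias {Ω α β : Type*} [Fintype Ω] [DecidableEq α] [DecidableEq β]
    (w : Ω → ℝ) (A : Ω → α) (Z : Ω → β) : ℝ :=
  mutualInfo w A Z / entropy w A

section aux
variable {Ω α β γ : Type*} [Fintype Ω] [DecidableEq α] [DecidableEq β] [DecidableEq γ]
variable {w : Ω → ℝ}

lemma prob_eq_sum_ite (A : Ω → α) (a : α) :
    prob w A a = ∑ ω, if A ω = a then w ω else 0 := by
  rw [prob, Finset.sum_filter]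

lemma prob_nonneg (hw0 : ∀ ω, 0 ≤ w ω) (A : Ω → α) (a : α) : 0 ≤ prob w A a :=
  Finset.sum_nonneg fun ω _ => hw0 ω

lemma prob_mono (hw0 : ∀ ω, 0 ≤ w ω) {Z : Ω → β} {W : Ω → γ} {z : β} {v : γ}
    (h : ∀ ω, Z ω = z → W ω = v) : prob w Z z ≤ prob w W v := by
  apply Finset.sum_le_sum_of_subset_of_nonneg
  · intro ω hω
    simp only [Finset.mem_filter, Finset.mem_univ, true_and] at *
    exact h ω hω
  · intro ω _ _; exact hw0 ω

lemma prob_comp_pair (A : Ω → α) (Z : Ω → β) (f : β → γ) (a : α) (v : γ) :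
    ∑ z ∈ (Finset.univ.image Z).filter (fun z => f z = v),
        prob w (fun ω => (A ω, Z ω)) (a, z)
      = prob w (fun ω => (A ω, f (Z ω))) (a, v) := by
  simp only [prob_eq_sum_ite]
  rw [Finset.sum_comm]
  refine Finset.sum_congr rfl fun ω _ => ?_
  by_cases hA : A ω = a
  · simp only [Prod.mk.injEq, hA, true_and]
    rw [Finset.sum_ite_eq _ (Z ω)]
    simp [Finset.mem_filter, Finset.mem_image]
  · simp [Prod.mk.injEq, hA]


lemma prob_comp (Z : Ω → β) (f : β → γ) (v : γ) :
    ∑ z ∈ (Finset.univ.image Z).filter (fun z => f z = v), prob w Z z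
      = prob w (fun ω => f (Z ω)) v := by
  simp only [prob_eq_sum_ite]
  rw [Finset.sum_comm]
  refine Finset.sum_congr rfl fun ω _ => ?_
  rw [Finset.sum_ite_eq _ (Z ω)]
  simp [Finset.mem_filter, Finset.mem_image]

lemma condEntropy_eq (hw0 : ∀ ω, 0 ≤ w ω) (A : Ω → α) (Z : Ω → β) :
    condEntropy w A Z = -∑ z ∈ Finset.univ.image Z, ∑ a ∈ Finset.univ.image A,
      prob w (fun ω => (A ω, Z ω)) (a, z) *
        Real.log (prob w (fun ω => (A ω, Z ω)) (a, z) / prob w Z z) := by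
  rw [condEntropy, ← Finset.sum_neg_distrib]
  refine Finset.sum_congr rfl fun z _ => ?_
  by_cases hz : prob w Z z = 0
  · have h0 : ∀ a ∈ Finset.univ.image A, prob w (fun ω => (A ω, Z ω)) (a, z) = 0 := by
      intro a _
      refine le_antisymm ?_ (prob_nonneg hw0 _ _)
      rw [← hz]
      exact prob_mono hw0 fun ω h => congrArg Prod.snd h
    rw [hz, zero_mul]
    rw [Finset.sum_eq_zero fun a ha => by rw [h0 a ha, zero_mul]]
    simp
  · rw [mul_neg, Finset.mul_sum, neg_inj]
    refine Finset.sum_congr rfl fun a _ => ?_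
    rw [← mul_assoc, mul_div_cancel₀ _ hz]

lemma logSum {ι : Type*} (s : Finset ι) (p q : ι → ℝ) (hp : ∀ i ∈ s, 0 ≤ p i)
    (hpq : ∀ i ∈ s, p i ≤ q i) :
    (∑ i ∈ s, p i) * Real.log ((∑ i ∈ s, p i) / (∑ i ∈ s, q i)) ≤
      ∑ i ∈ s, p i * Real.log (p i / q i) := by
  have hq : ∀ i ∈ s, 0 ≤ q i := fun i hi => (hp i hi).trans (hpq i hi)
  by_cases hS : ∑ i ∈ s, q i = 0
  · have hq0 : ∀ i ∈ s, q i = 0 := (Finset.sum_eq_zero_iff_of_nonneg hq).1 hS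
    have hp0 : ∀ i ∈ s, p i = 0 := fun i hi =>
      le_antisymm (hq0 i hi ▸ hpq i hi) (hp i hi)
    have hz : ∀ i ∈ s, p i * Real.log (p i / q i) = 0 := fun i hi => by
      rw [hp0 i hi, zero_mul]
    rw [Finset.sum_eq_zero hz, Finset.sum_eq_zero hp0]
    simp
  · have hS' : 0 < ∑ i ∈ s, q i := (Finset.sum_nonneg hq).lt_of_ne (Ne.symm hS)
    set S := ∑ i ∈ s, q i with hSdef
    set T := ∑ i ∈ s, p i with hTdef
    have h := Real.convexOn_mul_log.map_sum_le (t := s) (w := fun i => q i / S)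
      (p := fun i => p i / q i)
      (fun i hi => div_nonneg (hq i hi) hS'.le)
      (by rw [← Finset.sum_div, ← hSdef, div_self hS])
      (fun i hi => Set.mem_Ici.2 (div_nonneg (hp i hi) (hq i hi)))
    have key1 : ∑ i ∈ s, (q i / S) • (p i / q i) = T / S := by
      rw [hTdef, Finset.sum_div]
      refine Finset.sum_congr rfl fun i hi => ?_
      by_cases hqi : q i = 0
      · have hpi : p i = 0 := le_antisymm (hqi ▸ hpq i hi) (hp i hi)
        simp [hqi, hpi]
      · rw [smul_eq_mul]; field_simp
    have key2 : ∑ i ∈ s, (q i / S) • ((p i / q i) * Real.log (p i / q i)) =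
        (∑ i ∈ s, p i * Real.log (p i / q i)) / S := by
      rw [Finset.sum_div]
      refine Finset.sum_congr rfl fun i hi => ?_
      by_cases hqi : q i = 0
      · have hpi : p i = 0 := le_antisymm (hqi ▸ hpq i hi) (hp i hi)
        simp [hqi, hpi]
      · rw [smul_eq_mul]; field_simp
    rw [key1, key2] at h
    have h2 := mul_le_mul_of_nonneg_left h hS'.le
    calc T * Real.log (T / S) = S * (T / S * Real.log (T / S)) := by
          field_simp
      _ ≤ S * ((∑ i ∈ s, p i * Real.log (p i / q i)) / S) := h2
      _ = ∑ i ∈ s, p i * Real.log (p i / q i) := by field_simp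


lemma condEntropy_le_comp (hw0 : ∀ ω, 0 ≤ w ω) (A : Ω → α) (Z : Ω → β) (f : β → γ) :
    condEntropy w A Z ≤ condEntropy w A (fun ω => f (Z ω)) := by
  rw [condEntropy_eq hw0, condEntropy_eq hw0, neg_le_neg_iff]
  have hmaps : ∀ z ∈ Finset.univ.image Z, f z ∈ Finset.univ.image (fun ω => f (Z ω)) := by
    intro z hz
    obtain ⟨ω, _, rfl⟩ := Finset.mem_image.1 hz
    exact Finset.mem_image_of_mem _ (Finset.mem_univ ω)
  rw [← Finset.sum_fiberwise_of_maps_to hmaps]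
  refine Finset.sum_le_sum fun v _ => ?_
  rw [Finset.sum_comm]
  refine Finset.sum_le_sum fun a _ => ?_
  rw [← prob_comp_pair A Z f a v, ← prob_comp Z f v]
  exact logSum _ _ _ (fun z _ => prob_nonneg hw0 _ _)
    (fun z _ => prob_mono hw0 fun ω h => congrArg Prod.snd h)



end aux

theorem bias_chain_inequality
    {Ω β : Type*} [Fintype Ω] [DecidableEq β]
    (w : Ω → ℝ) (hw0 : ∀ ω, 0 ≤ w ω) (hw1 : ∑ ω, w ω = 1)
    (A : Ω → Fin 2) (X : Ω → β) (Y0 Y1 : Ω → ℝ)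
    (hH : 0 < entropy w A)
    (hci : ∀ (a : Fin 2) (y0 y1 : ℝ) (x : β), 0 < prob w X x →
      prob w (fun ω => (A ω, (Y0 ω, Y1 ω), X ω)) (a, (y0, y1), x) / prob w X x =
        (prob w (fun ω => (A ω, X ω)) (a, x) / prob w X x) *
          (prob w (fun ω => ((Y0 ω, Y1 ω), X ω)) ((y0, y1), x) / prob w X x)) :
    bias w A (fun ω => (Y0 ω, Y1 ω)) ≤ bias w A X ∧
      max (max (bias w A Y0) (bias w A Y1)) (bias w A (fun ω => Y1 ω - Y0 ω)) ≤
        bias w A (fun ω => (Y0 ω, Y1 ω)) := by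
  -- conditional independence: H(A | (Y,X)) = H(A | X)
  have hCI : condEntropy w A (fun ω => ((Y0 ω, Y1 ω), X ω)) = condEntropy w A X := by
    rw [condEntropy_eq hw0, condEntropy_eq hw0, neg_inj]
    have hmaps : ∀ q ∈ Finset.univ.image (fun ω => ((Y0 ω, Y1 ω), X ω)),
        Prod.snd q ∈ Finset.univ.image X := by
      intro q hq
      obtain ⟨ω, _, rfl⟩ := Finset.mem_image.1 hq
      exact Finset.mem_image_of_mem _ (Finset.mem_univ ω)
    rw [← Finset.sum_fiberwise_of_maps_to hmaps]
    refine Finset.sum_congr rfl fun x _ => ?_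
    rw [Finset.sum_comm]
    refine Finset.sum_congr rfl fun a _ => ?_
    have hmarg : ∑ q ∈ (Finset.univ.image (fun ω => ((Y0 ω, Y1 ω), X ω))).filter
          (fun q => Prod.snd q = x),
        prob w (fun ω => (A ω, ((Y0 ω, Y1 ω), X ω))) (a, q)
          = prob w (fun ω => (A ω, X ω)) (a, x) :=
      prob_comp_pair A (fun ω => ((Y0 ω, Y1 ω), X ω)) Prod.snd a x
    by_cases hx0 : prob w X x = 0
    · have h1 : ∀ q ∈ (Finset.univ.image (fun ω => ((Y0 ω, Y1 ω), X ω))).filter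
          (fun q => Prod.snd q = x),
          prob w (fun ω => (A ω, ((Y0 ω, Y1 ω), X ω))) (a, q) *
            Real.log (prob w (fun ω => (A ω, ((Y0 ω, Y1 ω), X ω))) (a, q) /
              prob w (fun ω => ((Y0 ω, Y1 ω), X ω)) q) = 0 := by
        intro q hq
        have hq2 : Prod.snd q = x := (Finset.mem_filter.1 hq).2
        have : prob w (fun ω => (A ω, ((Y0 ω, Y1 ω), X ω))) (a, q) = 0 := by
          refine le_antisymm ?_ (prob_nonneg hw0 _ _)
          rw [← hx0]
          exact prob_mono hw0 fun ω h => by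
            have := congrArg Prod.snd h; simp at this; rw [← hq2, ← this]
        rw [this, zero_mul]
      have h2 : prob w (fun ω => (A ω, X ω)) (a, x) = 0 := by
        refine le_antisymm ?_ (prob_nonneg hw0 _ _)
        rw [← hx0]
        exact prob_mono hw0 fun ω h => congrArg Prod.snd h
      rw [Finset.sum_eq_zero h1, h2, zero_mul]
    · have hxpos : 0 < prob w X x := (prob_nonneg hw0 X x).lt_of_ne (Ne.symm hx0)
      have hlog : ∀ q ∈ (Finset.univ.image (fun ω => ((Y0 ω, Y1 ω), X ω))).filter
          (fun q => Prod.snd q = x),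
          prob w (fun ω => (A ω, ((Y0 ω, Y1 ω), X ω))) (a, q) *
            Real.log (prob w (fun ω => (A ω, ((Y0 ω, Y1 ω), X ω))) (a, q) /
              prob w (fun ω => ((Y0 ω, Y1 ω), X ω)) q)
          = prob w (fun ω => (A ω, ((Y0 ω, Y1 ω), X ω))) (a, q) *
            Real.log (prob w (fun ω => (A ω, X ω)) (a, x) / prob w X x) := by
        rintro ⟨⟨y0, y1⟩, x'⟩ hq
        have hq2 : x' = x := (Finset.mem_filter.1 hq).2
        subst hq2
        by_cases hq0 : prob w (fun ω => (A ω, ((Y0 ω, Y1 ω), X ω))) (a, ((y0, y1), x')) = 0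
        · rw [hq0, zero_mul, zero_mul]
        · have hqa : 0 < prob w (fun ω => (A ω, ((Y0 ω, Y1 ω), X ω))) (a, ((y0, y1), x')) :=
            (prob_nonneg hw0 _ _).lt_of_ne (Ne.symm hq0)
          have hQpos : 0 < prob w (fun ω => ((Y0 ω, Y1 ω), X ω)) ((y0, y1), x') :=
            lt_of_lt_of_le hqa (prob_mono hw0 fun ω h => congrArg Prod.snd h)
          have hkey := hci a y0 y1 x' hxpos
          have hk : prob w (fun ω => (A ω, ((Y0 ω, Y1 ω), X ω))) (a, ((y0, y1), x')) *
              prob w X x' = prob w (fun ω => (A ω, X ω)) (a, x') *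
                prob w (fun ω => ((Y0 ω, Y1 ω), X ω)) ((y0, y1), x') := by
            field_simp at hkey
            exact mul_right_cancel₀ hx0 (by linear_combination (prob w X x') * hkey)
          have hdd : prob w (fun ω => (A ω, ((Y0 ω, Y1 ω), X ω))) (a, ((y0, y1), x')) /
              prob w (fun ω => ((Y0 ω, Y1 ω), X ω)) ((y0, y1), x')
              = prob w (fun ω => (A ω, X ω)) (a, x') / prob w X x' := by
            rw [div_eq_div_iff hQpos.ne' hxpos.ne']
            linear_combination hk
          rw [hdd]
      rw [Finset.sum_congr rfl hlog, ← Finset.sum_mul, hmarg]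
  -- data processing inequalities
  have hYX : condEntropy w A (fun ω => ((Y0 ω, Y1 ω), X ω)) ≤
      condEntropy w A (fun ω => (Y0 ω, Y1 ω)) :=
    condEntropy_le_comp hw0 A (fun ω => ((Y0 ω, Y1 ω), X ω)) Prod.fst
  have hY0 : condEntropy w A (fun ω => (Y0 ω, Y1 ω)) ≤ condEntropy w A Y0 :=
    condEntropy_le_comp hw0 A (fun ω => (Y0 ω, Y1 ω)) Prod.fst
  have hY1 : condEntropy w A (fun ω => (Y0 ω, Y1 ω)) ≤ condEntropy w A Y1 :=
    condEntropy_le_comp hw0 A (fun ω => (Y0 ω, Y1 ω)) Prod.snd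
  have hYd : condEntropy w A (fun ω => (Y0 ω, Y1 ω)) ≤
      condEntropy w A (fun ω => Y1 ω - Y0 ω) :=
    condEntropy_le_comp hw0 A (fun ω => (Y0 ω, Y1 ω)) (fun p => p.2 - p.1)
  have hX : condEntropy w A X ≤ condEntropy w A (fun ω => (Y0 ω, Y1 ω)) := hCI ▸ hYX
  unfold bias mutualInfo
  constructor
  · exact (div_le_div_iff_of_pos_right hH).mpr (sub_le_sub_left hX _)
  · refine max_le (max_le ?_ ?_) ?_
    · exact (div_le_div_iff_of_pos_right hH).mpr (sub_le_sub_left hY0 _)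
    · exact (div_le_div_iff_of_pos_right hH).mpr (sub_le_sub_left hY1 _)
    · exact (div_le_div_iff_of_pos_right hH).mpr (sub_le_sub_left hYd _)
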